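/- Let f, h ∈ H^∞ with ‖h‖_∞ ≤ 1 and h(0) = 0, and set φ = f + conj(T_{h̄} f). Then the Toeplitz operator T_φ is hyponormal, i.e. the self-commutator [T_φ*, T_φ] = T_φ*T_φ − T_φT_φ* is a positive operator: ⟨[T_φ*, T_φ] p, p⟩ ≥ 0 for all p ∈ H². -/

import Mathlib

open MeasureTheory Complex Real ContinuousLinearMap
open scoped InnerProductSpace

noncomputable section

namespace SpectralArea

instance : Fact ((0:ℝ) < 2 * Real.pi) := ⟨by positivity⟩
instance : Fact ((1:ENNReal) ≤ ⊤) := ⟨le_top⟩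

/-- The unit circle `∂𝔻`, parametrized by angle, i.e. `ℝ / 2πℤ`. -/
abbrev Circle2pi : Type := AddCircle (2 * Real.pi)

/-- Normalized arclength measure `dθ/(2π)` on the circle. -/
abbrev haar : Measure Circle2pi := AddCircle.haarAddCircle

/-- `L²(∂𝔻)` with respect to normalized arclength measure. -/
abbrev L2 : Type := Lp ℂ 2 haar

/-- `L^∞(∂𝔻)`. -/
abbrev Linf : Type := Lp ℂ ⊤ haar

/-- The Hardy space `H²`: the subspace of `L²` of functions whose negative Fourier
coefficients vanish. -/
def Hardy : Submodule ℂ L2 where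
  carrier := {u | ∀ n : ℤ, n < 0 → fourierCoeff (u : Circle2pi → ℂ) n = 0}
  add_mem' := by
    intro u v hu hv n hn
    rw [← fourierBasis_repr, map_add, lp.coeFn_add, Pi.add_apply,
      fourierBasis_repr, fourierBasis_repr, hu n hn, hv n hn, add_zero]
  zero_mem' := by
    intro n hn
    rw [← fourierBasis_repr, map_zero, lp.coeFn_zero, Pi.zero_apply]
  smul_mem' := by
    intro c u hu n hn
    rw [← fourierBasis_repr, _root_.map_smul, lp.coeFn_smul, Pi.smul_apply,
      fourierBasis_repr, hu n hn, smul_zero]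

lemma hardy_isClosed : IsClosed (Hardy : Set L2) := by
  have h : (Hardy : Set L2) =
      ⋂ n ∈ {n : ℤ | n < 0}, ((innerSL ℂ (fourierBasis n)) ⁻¹' {(0 : ℂ)}) := by
    ext u
    simp only [Set.mem_iInter, Set.mem_preimage, Set.mem_setOf_eq, Set.mem_singleton_iff,
      innerSL_apply_apply]
    constructor
    · intro hu n hn
      rw [← fourierBasis.repr_apply_apply u n, fourierBasis_repr]
      exact hu n hn
    · intro hu n hn
      rw [← fourierBasis_repr, fourierBasis.repr_apply_apply u n]
      exact hu n hn
  rw [h]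
  exact isClosed_biInter fun n _ =>
    isClosed_singleton.preimage (innerSL ℂ (fourierBasis n)).continuous

/-- `H²` is a complete (hence closed) subspace of `L²`. -/
instance : CompleteSpace Hardy := hardy_isClosed.completeSpace_coe

/-- The orthogonal projection `P : L² → H²`. -/
def proj : L2 →L[ℂ] Hardy := Hardy.orthogonalProjectionOnto

/-- Pointwise multiplication by an `L^∞` function, as a bounded operator on `L²`. -/
def mulL (φ : Linf) : L2 →L[ℂ] L2 :=
  LinearMap.mkContinuous
    { toFun := fun u => ((Lp.memLp u).smul (r := 2) (Lp.memLp φ)).toLp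
        ((φ : Circle2pi → ℂ) • (u : Circle2pi → ℂ))
      map_add' := by
        intro u v
        rw [← MemLp.toLp_add, MemLp.toLp_eq_toLp_iff]
        filter_upwards [Lp.coeFn_add u v] with x hx
        simp only [Pi.mul_apply, Pi.smul_apply, smul_eq_mul, hx, Pi.add_apply, mul_add]
      map_smul' := by
        intro c u
        rw [RingHom.id_apply, ← MemLp.toLp_const_smul, MemLp.toLp_eq_toLp_iff]
        filter_upwards [Lp.coeFn_smul c u] with x hx
        simp only [Pi.mul_apply, Pi.smul_apply, smul_eq_mul, hx]
        ring }
    ‖φ‖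
    (by
      intro u
      simp only [LinearMap.coe_mk, AddHom.coe_mk]
      rw [Lp.norm_toLp]
      calc (eLpNorm ((φ : Circle2pi → ℂ) • (u : Circle2pi → ℂ)) 2 haar).toReal
          ≤ (eLpNorm (φ : Circle2pi → ℂ) ⊤ haar * eLpNorm (u : Circle2pi → ℂ) 2 haar).toReal := by
            apply ENNReal.toReal_mono
              (ENNReal.mul_ne_top (Lp.eLpNorm_ne_top φ) (Lp.eLpNorm_ne_top u))
            exact eLpNorm_smul_le_mul_eLpNorm (Lp.aestronglyMeasurable u)
              (Lp.aestronglyMeasurable φ)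
        _ = ‖φ‖ * ‖u‖ := by
            rw [ENNReal.toReal_mul, Lp.norm_def, Lp.norm_def])

/-- Complex conjugation on `L^p` of the circle. -/
def conjLp {p : ENNReal} (f : Lp ℂ p haar) : Lp ℂ p haar :=
  Complex.conjLIE.lipschitz.compLp (map_zero Complex.conjLIE) f

/-- `f ↦ (θ ↦ conj (f (-θ)))`; on boundary values, this is `k(z) = conj (h (z̄))`. -/
def conjReflect (h : Linf) : Linf :=
  conjLp (Lp.compMeasurePreserving (fun θ : Circle2pi => -θ)
    (Measure.measurePreserving_neg haar) h)

/-- An `L^∞` function is in `L²` (the measure is finite). -/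
def toL2 (f : Linf) : L2 := ((Lp.memLp f).mono_exponent le_top).toLp f

/-- Membership in `H^∞`: a bounded function whose negative Fourier coefficients vanish
(i.e. the boundary value of a bounded analytic function on `𝔻`). -/
def MemHinf (f : Linf) : Prop := ∀ n : ℤ, n < 0 → fourierCoeff (f : Circle2pi → ℂ) n = 0

lemma fourierCoeff_congr_ae {f g : Circle2pi → ℂ} (h : f =ᵐ[haar] g) (n : ℤ) :
    fourierCoeff f n = fourierCoeff g n := by
  simp only [fourierCoeff]
  exact integral_congr_ae (by filter_upwards [h] with x hx; rw [hx])

lemma toL2_mem_Hardy {f : Linf} (hf : MemHinf f) : toL2 f ∈ Hardy := fun n hn => by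
  have h : (toL2 f : Circle2pi → ℂ) =ᵐ[haar] (f : Circle2pi → ℂ) := MemLp.coeFn_toLp _
  rw [fourierCoeff_congr_ae h n]
  exact hf n hn

/-- The Toeplitz operator `T_φ : H² → H²`, `T_φ u = P (φ u)`. -/
def Toeplitz (φ : Linf) : Hardy →L[ℂ] Hardy := proj ∘L mulL φ ∘L Hardy.subtypeL

/-- The Toeplitz operator viewed as acting on `L²` (precompose with inclusion,
postcompose with inclusion): `u ↦ P (φ u)` as an element of `L²`. -/
def ToeplitzL2 (φ : Linf) : L2 →L[ℂ] L2 := Hardy.subtypeL ∘L proj ∘L mulL φ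

/-- The unitary `U` on `L²`: `(U h)(z) = z̄ h(z̄)`, in angle coordinates
`(U h)(θ) = e^{-iθ} h(-θ)`. -/
def Umap : L2 →L[ℂ] L2 :=
  mulL (fourierLp ⊤ (-1)) ∘L
    (Lp.compMeasurePreservingₗᵢ ℂ (fun θ : Circle2pi => -θ)
      (Measure.measurePreserving_neg haar)).toContinuousLinearMap

/-- The Hankel operator `H_φ = U (I - P) M_φ`, viewed on all of `L²`. -/
def Hankel (φ : Linf) : L2 →L[ℂ] L2 :=
  Umap ∘L (ContinuousLinearMap.id ℂ L2 - Hardy.subtypeL ∘L proj) ∘L mulL φ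

/-- The self-commutator `[T*, T] = T*T - TT*`. -/
def selfCommutator (T : Hardy →L[ℂ] Hardy) : Hardy →L[ℂ] Hardy :=
  adjoint T ∘L T - T ∘L adjoint T

section Aux
open ComplexConjugate

lemma coeFn_mulL (φ : Linf) (u : L2) :
    (mulL φ u : Circle2pi → ℂ) =ᵐ[haar]
      fun x => (φ : Circle2pi → ℂ) x * (u : Circle2pi → ℂ) x := by
  have h := MemLp.coeFn_toLp ((Lp.memLp u).smul (r := 2) (Lp.memLp φ))
  filter_upwards [h] with x hx
  exact hx

lemma coeFn_conjLp {p : ENNReal} (f : Lp ℂ p haar) :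
    (conjLp f : Circle2pi → ℂ) =ᵐ[haar] fun x => conj ((f : Circle2pi → ℂ) x) :=
  LipschitzWith.coeFn_compLp _ _ _

lemma mulL_opNorm (φ : Linf) : ‖mulL φ‖ ≤ ‖φ‖ :=
  LinearMap.mkContinuous_norm_le _ (norm_nonneg φ) _

lemma norm_mulL_le (φ : Linf) (u : L2) : ‖mulL φ u‖ ≤ ‖φ‖ * ‖u‖ :=
  le_trans ((mulL φ).le_opNorm u) (by gcongr; exact mulL_opNorm φ)

end Aux
section Aux2
open ComplexConjugate

lemma fourierCoeff_conj (w : Circle2pi → ℂ) (n : ℤ) :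
    fourierCoeff (fun x => conj (w x)) n = conj (fourierCoeff w (-n)) := by
  simp only [fourierCoeff, smul_eq_mul]
  rw [← integral_conj]
  congr 1
  funext x
  rw [map_mul, ← fourier_neg]
  simp

lemma fourierCoeff_mul_fourier (w : Circle2pi → ℂ) (j m : ℤ) :
    fourierCoeff (fun x => w x * fourier j x) m = fourierCoeff w (m - j) := by
  simp only [fourierCoeff, smul_eq_mul]
  congr 1
  funext x
  rw [show (-(m - j) : ℤ) = -m + j by ring, fourier_add]
  ring

lemma fourierCoeff_L2_sub (u v : L2) (n : ℤ) :
    fourierCoeff ((u - v : L2) : Circle2pi → ℂ) n =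
      fourierCoeff (u : Circle2pi → ℂ) n - fourierCoeff (v : Circle2pi → ℂ) n := by
  rw [← fourierBasis_repr, ← fourierBasis_repr, ← fourierBasis_repr, map_sub,
    lp.coeFn_sub, Pi.sub_apply]

end Aux2
section Aux3
open ComplexConjugate

lemma inner_hardy_zero (w u : L2)
    (hw : ∀ n : ℤ, 0 ≤ n → fourierCoeff (w : Circle2pi → ℂ) n = 0)
    (hu : u ∈ Hardy) : ⟪w, u⟫_ℂ = 0 := by
  rw [← fourierBasis.repr.inner_map_map w u, lp.inner_eq_tsum]
  have : ∀ n : ℤ, ⟪fourierBasis.repr w n, fourierBasis.repr u n⟫_ℂ = 0 := by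
    intro n
    rcases le_or_gt 0 n with hn | hn
    · rw [fourierBasis_repr, hw n hn, inner_zero_left]
    · rw [fourierBasis_repr u, hu n hn, inner_zero_right]
  rw [tsum_congr this, tsum_zero]

lemma fourierCoeff_mulL (a : Linf) (u : L2) (n : ℤ) :
    fourierCoeff ((mulL a u : L2) : Circle2pi → ℂ) n =
      fourierCoeff (fun x => (a : Circle2pi → ℂ) x * (u : Circle2pi → ℂ) x) n :=
  fourierCoeff_congr_ae (coeFn_mulL a u) n

/-- Key lemma: multiplication by an `H^∞` symbol preserves `H²`. -/
lemma mulL_mem_Hardy {a : Linf} (ha : MemHinf a) {u : L2} (hu : u ∈ Hardy) :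
    mulL a u ∈ Hardy := by
  intro n hn
  rw [fourierCoeff_mulL]
  set W : L2 := mulL (conjLp a) (fourierLp 2 n) with hW
  have hWfn : (W : Circle2pi → ℂ) =ᵐ[haar]
      fun x => conj ((a : Circle2pi → ℂ) x) * fourier n x := by
    filter_upwards [coeFn_mulL (conjLp a) (fourierLp 2 n), coeFn_conjLp a,
      coeFn_fourierLp 2 n] with x h1 h2 h3
    rw [h1, h2, h3]
  -- ⟪W, u⟫ equals the Fourier coefficient we want
  have hinner : ⟪W, u⟫_ℂ = fourierCoeff
      (fun x => (a : Circle2pi → ℂ) x * (u : Circle2pi → ℂ) x) n := by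
    rw [MeasureTheory.L2.inner_def]
    simp only [fourierCoeff, smul_eq_mul]
    apply integral_congr_ae
    filter_upwards [hWfn] with x hx
    rw [RCLike.inner_apply, hx, map_mul, ← fourier_neg]
    simp only [RingHom.id_apply, starRingEnd_self_apply]
    ring
  -- all nonnegative Fourier coefficients of W vanish
  have hWcoeff : ∀ k : ℤ, 0 ≤ k → fourierCoeff (W : Circle2pi → ℂ) k = 0 := by
    intro k hk
    have h1 : fourierCoeff (W : Circle2pi → ℂ) k =
        fourierCoeff (fun x => conj ((a : Circle2pi → ℂ) x * fourier (-n) x)) k := by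
      apply fourierCoeff_congr_ae
      filter_upwards [hWfn] with x hx
      rw [hx, map_mul, ← fourier_neg, neg_neg]
    rw [h1, fourierCoeff_conj, fourierCoeff_mul_fourier, ha (-k - -n) (by omega), map_zero]
  rw [← hinner]
  exact inner_hardy_zero W u hWcoeff hu
end Aux3
section Aux4
open ComplexConjugate

lemma coe_proj_of_mem {u : L2} (hu : u ∈ Hardy) : ((proj u : Hardy) : L2) = u :=
  Submodule.starProjection_eq_self_iff.mpr hu

lemma inner_sub_proj_zero (u : L2) {w : L2} (hw : w ∈ Hardy) :
    ⟪u - ((proj u : Hardy) : L2), w⟫_ℂ = 0 :=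
  Submodule.starProjection_inner_eq_zero u w hw

lemma norm_sq_proj (u : L2) :
    ‖((proj u : Hardy) : L2)‖ ^ 2 = ‖u‖ ^ 2 - ‖u - ((proj u : Hardy) : L2)‖ ^ 2 := by
  have h0 : ⟪u - ((proj u : Hardy) : L2), ((proj u : Hardy) : L2)⟫_ℂ = 0 :=
    inner_sub_proj_zero u (proj u).2
  have hdec : ‖((proj u : Hardy) : L2) + (u - ((proj u : Hardy) : L2))‖ ^ 2
      = ‖((proj u : Hardy) : L2)‖ ^ 2 + 2 * RCLike.re ⟪((proj u : Hardy) : L2),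
          u - ((proj u : Hardy) : L2)⟫_ℂ + ‖u - ((proj u : Hardy) : L2)‖ ^ 2 :=
    norm_add_sq _ _
  rw [add_sub_cancel] at hdec
  rw [← inner_conj_symm, h0, map_zero, map_zero] at hdec
  linarith

lemma norm_sub_proj_le (u : L2) : ‖u - ((proj u : Hardy) : L2)‖ ≤ ‖u‖ := by
  have h := norm_sq_proj u
  nlinarith [norm_nonneg ((proj u : Hardy) : L2), norm_nonneg u,
    norm_nonneg (u - ((proj u : Hardy) : L2))]

lemma fourierBasis_mem_Hardy {m : ℤ} (hm : 0 ≤ m) : (fourierBasis m : L2) ∈ Hardy := by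
  intro n hn
  rw [← fourierBasis_repr, fourierBasis.repr_self, lp.single_apply, Pi.single_eq_of_ne (by omega)]

lemma fourierCoeff_proj (u : L2) (m : ℤ) (hm : 0 ≤ m) :
    fourierCoeff (((proj u : Hardy) : L2) : Circle2pi → ℂ) m =
      fourierCoeff (u : Circle2pi → ℂ) m := by
  have h : fourierCoeff (u : Circle2pi → ℂ) m -
      fourierCoeff (((proj u : Hardy) : L2) : Circle2pi → ℂ) m = 0 := by
    rw [← fourierCoeff_L2_sub, ← fourierBasis_repr, fourierBasis.repr_apply_apply]
    rw [← inner_conj_symm]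
    rw [inner_sub_proj_zero u (fourierBasis_mem_Hardy hm), map_zero]
  linear_combination -h
end Aux4
section Aux5
open ComplexConjugate

lemma inner_mulL_conj (φ : Linf) (u v : L2) :
    ⟪mulL (conjLp φ) u, v⟫_ℂ = ⟪u, mulL φ v⟫_ℂ := by
  rw [MeasureTheory.L2.inner_def, MeasureTheory.L2.inner_def]
  apply integral_congr_ae
  filter_upwards [coeFn_mulL (conjLp φ) u, coeFn_mulL φ v, coeFn_conjLp φ] with x h1 h2 h3
  rw [RCLike.inner_apply, RCLike.inner_apply, h1, h2, h3, map_mul, starRingEnd_self_apply]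
  ring

lemma adjoint_toeplitz (φ : Linf) :
    ContinuousLinearMap.adjoint (Toeplitz φ) = Toeplitz (conjLp φ) := by
  symm
  rw [ContinuousLinearMap.eq_adjoint_iff]
  intro x y
  show ⟪Hardy.orthogonalProjectionOnto (mulL (conjLp φ) ((x : Hardy) : L2)), y⟫_ℂ
      = ⟪x, Hardy.orthogonalProjectionOnto (mulL φ ((y : Hardy) : L2))⟫_ℂ
  rw [Submodule.inner_orthogonalProjectionOnto_eq_of_mem_right,
    Submodule.inner_orthogonalProjectionOnto_eq_of_mem_left]
  exact inner_mulL_conj φ (x : L2) (y : L2)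

lemma norm_mulL_conjLp (φ : Linf) (u : L2) : ‖mulL (conjLp φ) u‖ = ‖mulL φ u‖ := by
  rw [Lp.norm_def, Lp.norm_def]
  congr 1
  apply eLpNorm_congr_norm_ae
  filter_upwards [coeFn_mulL (conjLp φ) u, coeFn_mulL φ u, coeFn_conjLp φ] with x h1 h2 h3
  rw [h1, h2, h3]
  simp [norm_mul]

lemma conjLp_conjLp {p : ENNReal} (φ : Lp ℂ p haar) : conjLp (conjLp φ) = φ := by
  apply Lp.ext
  filter_upwards [coeFn_conjLp (conjLp φ), coeFn_conjLp φ] with x h1 h2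
  rw [h1, h2, starRingEnd_self_apply]
end Aux5
section Aux6
open ComplexConjugate

lemma coeFn_toL2 (a : Linf) :
    ((toL2 a : L2) : Circle2pi → ℂ) =ᵐ[haar] (a : Circle2pi → ℂ) :=
  MemLp.coeFn_toLp _

lemma sub_proj_add_left {v u : L2} (hv : v ∈ Hardy) :
    (v + u) - ((proj (v + u) : Hardy) : L2) = u - ((proj u : Hardy) : L2) := by
  have h1 : ((proj (v + u) : Hardy) : L2) = v + ((proj u : Hardy) : L2) := by
    have h2 : proj (v + u) = proj v + proj u := map_add proj v u
    rw [h2, Submodule.coe_add, coe_proj_of_mem hv]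
  rw [h1]
  abel

lemma sub_proj_sub_right {s : L2} (u : L2) (hs : s ∈ Hardy) :
    (u - s) - ((proj (u - s) : Hardy) : L2) = u - ((proj u : Hardy) : L2) := by
  have h0 : u - s = (-s) + u := by abel
  rw [h0, sub_proj_add_left (neg_mem hs)]
end Aux6
open ComplexConjugate in
open scoped ComplexOrder in
set_option maxHeartbeats 1000000 in
/-- For `f, h ∈ H^∞` with `‖h‖_∞ ≤ 1`, `h(0) = 0` and
`φ = f + conj (T_{h̄} f)`, the Toeplitz operator `T_φ` is hyponormal:
`⟨[T_φ*, T_φ] p, p⟩ ≥ 0` for all `p ∈ H²`. -/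
theorem toeplitz_hyponormal (f h φ : Linf)
    (hf : MemHinf f) (hh : MemHinf h) (hhnorm : ‖h‖ ≤ 1)
    (hh0 : fourierCoeff (h : Circle2pi → ℂ) 0 = 0)
    (hφ : toL2 φ = toL2 f +
      conjLp ((Toeplitz (conjLp h) ⟨toL2 f, toL2_mem_Hardy hf⟩ : Hardy) : L2)) :
    ∀ p : Hardy, 0 ≤ ⟪selfCommutator (Toeplitz φ) p, p⟫_ℂ := by
  intro p
  set T := Toeplitz φ with hTdef
  set G : L2 := ((Toeplitz (conjLp h) ⟨toL2 f, toL2_mem_Hardy hf⟩ : Hardy) : L2) with hGdef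
  have hG : G ∈ Hardy := Submodule.coe_mem _
  set A : L2 := mulL φ (p : L2) with hA
  set B : L2 := mulL (conjLp φ) (p : L2) with hB
  -- the key norm inequality `‖T* p‖ ≤ ‖T p‖`
  have key : ‖(ContinuousLinearMap.adjoint T) p‖ ≤ ‖T p‖ := by
    -- Fourier coefficients of G
    have hGcoeff : ∀ m : ℤ, 0 ≤ m → fourierCoeff (G : Circle2pi → ℂ) m =
        fourierCoeff (fun x => conj ((h : Circle2pi → ℂ) x) * (f : Circle2pi → ℂ) x) m := by
      intro m hm
      have e0 : G = ((proj (mulL (conjLp h) (toL2 f)) : Hardy) : L2) := rfl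
      rw [e0, fourierCoeff_proj _ m hm, fourierCoeff_mulL]
      apply fourierCoeff_congr_ae
      filter_upwards [coeFn_conjLp h, coeFn_toL2 f] with x e1 e2
      rw [e1, e2]
    -- `φ = f + conj G` almost everywhere
    have hφae : (φ : Circle2pi → ℂ) =ᵐ[haar]
        fun x => (f : Circle2pi → ℂ) x + conj ((G : Circle2pi → ℂ) x) := by
      have h0 : ((toL2 φ : L2) : Circle2pi → ℂ) =ᵐ[haar]
          ((toL2 f + conjLp G : L2) : Circle2pi → ℂ) := by
        rw [hφ]
      filter_upwards [h0, coeFn_toL2 φ, coeFn_toL2 f, Lp.coeFn_add (toL2 f) (conjLp G),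
        coeFn_conjLp G] with x e0 e1 e2 e3 e4
      rw [← e1, e0, e3, Pi.add_apply, e2, e4]
    set g : Linf := φ - f with hgdef
    have hg : (g : Circle2pi → ℂ) =ᵐ[haar] fun x => conj ((G : Circle2pi → ℂ) x) := by
      filter_upwards [Lp.coeFn_sub φ f, hφae] with x e1 e2
      rw [e1, Pi.sub_apply, e2]
      ring
    set C : L2 := mulL g (p : L2) with hC
    set D : L2 := mulL (conjLp f) (p : L2) with hD
    -- decomposition of A
    have hAdec : A = mulL f (p : L2) + C := by
      apply Lp.ext
      filter_upwards [coeFn_mulL φ (p : L2), Lp.coeFn_add (mulL f (p : L2)) C,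
        coeFn_mulL f (p : L2), coeFn_mulL g (p : L2), Lp.coeFn_sub φ f] with x e1 e2 e3 e4 e5
      rw [e1, e2, Pi.add_apply, e3, e4, e5, Pi.sub_apply]
      ring
    -- decomposition of B
    set cg : Linf := conjLp g with hcgdef
    have hcg : MemHinf cg := by
      intro n hn
      have e0 : (cg : Circle2pi → ℂ) =ᵐ[haar] (G : Circle2pi → ℂ) := by
        filter_upwards [coeFn_conjLp g, hg] with x e1 e2
        rw [e1, e2, starRingEnd_self_apply]
      rw [fourierCoeff_congr_ae e0 n]
      exact hG n hn
    have hBdec : B = mulL cg (p : L2) + D := by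
      apply Lp.ext
      filter_upwards [coeFn_mulL (conjLp φ) (p : L2), Lp.coeFn_add (mulL cg (p : L2)) D,
        coeFn_mulL cg (p : L2), coeFn_mulL (conjLp f) (p : L2), coeFn_conjLp φ, coeFn_conjLp f,
        coeFn_conjLp g, Lp.coeFn_sub φ f] with x e1 e2 e3 e4 e5 e6 e7 e8
      rw [e1, e2, Pi.add_apply, e3, e4, e5, e6, e7, e8, Pi.sub_apply, map_sub]
      ring
    -- the `H^∞` function r = h * conj f - g
    have hprod : MemLp ((h : Circle2pi → ℂ) • ((conjLp f : Linf) : Circle2pi → ℂ)) ⊤ haar :=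
      (Lp.memLp (conjLp f)).smul (r := ⊤) (Lp.memLp h)
    set r : Linf := hprod.toLp _ - g with hrdef
    have hrfn : (r : Circle2pi → ℂ) =ᵐ[haar] fun x =>
        (h : Circle2pi → ℂ) x * conj ((f : Circle2pi → ℂ) x) - conj ((G : Circle2pi → ℂ) x) := by
      filter_upwards [Lp.coeFn_sub (hprod.toLp _) g, hprod.coeFn_toLp, coeFn_conjLp f, hg]
        with x e1 e2 e3 e4
      rw [e1, Pi.sub_apply, e2, e4]
      simp only [Pi.smul_apply', Pi.smul_apply, smul_eq_mul, e3]
    set X : L2 := mulL h (toL2 (conjLp f)) with hX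
    have hXfn : (X : Circle2pi → ℂ) =ᵐ[haar] fun x =>
        (h : Circle2pi → ℂ) x * conj ((f : Circle2pi → ℂ) x) := by
      filter_upwards [coeFn_mulL h (toL2 (conjLp f)), coeFn_toL2 (conjLp f), coeFn_conjLp f]
        with x e1 e2 e3
      rw [e1, e2, e3]
    have hrmem : MemHinf r := by
      intro n hn
      have hXG : ((X - conjLp G : L2) : Circle2pi → ℂ) =ᵐ[haar] fun x =>
          (h : Circle2pi → ℂ) x * conj ((f : Circle2pi → ℂ) x) -
            conj ((G : Circle2pi → ℂ) x) := by
        filter_upwards [Lp.coeFn_sub X (conjLp G), hXfn, coeFn_conjLp G] with x e1 e2 e3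
        rw [e1, Pi.sub_apply, e2, e3]
      rw [fourierCoeff_congr_ae (hrfn.trans hXG.symm) n, fourierCoeff_L2_sub]
      have e5 : fourierCoeff ((conjLp G : L2) : Circle2pi → ℂ) n =
          fourierCoeff ((X : L2) : Circle2pi → ℂ) n := by
        rw [fourierCoeff_congr_ae (coeFn_conjLp G) n, fourierCoeff_conj,
          hGcoeff (-n) (by omega), ← fourierCoeff_conj, fourierCoeff_congr_ae hXfn n]
        congr 1
        funext x
        rw [map_mul, starRingEnd_self_apply]
      rw [e5, sub_self]
    set s : L2 := mulL r (p : L2) with hs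
    have hsmem : s ∈ Hardy := mulL_mem_Hardy hrmem p.2
    have hCdec : C = mulL h D - s := by
      apply Lp.ext
      filter_upwards [coeFn_mulL g (p : L2), Lp.coeFn_sub (mulL h D) s, coeFn_mulL h D,
        coeFn_mulL (conjLp f) (p : L2), coeFn_mulL r (p : L2), hg, hrfn, coeFn_conjLp f]
        with x e1 e2 e3 e4 e5 e6 e7 e8
      rw [e1, e2, Pi.sub_apply, e3, e4, e5, e6, e7, e8]
      ring
    -- absorption of analytic parts
    have hfp : mulL f (p : L2) ∈ Hardy := mulL_mem_Hardy hf p.2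
    have hgp : mulL cg (p : L2) ∈ Hardy := mulL_mem_Hardy hcg p.2
    set QD : L2 := ((proj D : Hardy) : L2) with hQD
    set w : L2 := D - QD with hw
    have hDdec : mulL h D = mulL h QD + mulL h w := by
      rw [hw, ← map_add, add_sub_cancel]
    have hQDp : mulL h QD ∈ Hardy := mulL_mem_Hardy hh (proj D).2
    have habs1 : A - ((proj A : Hardy) : L2) = C - ((proj C : Hardy) : L2) := by
      rw [hAdec]; exact sub_proj_add_left hfp
    have habs2 : B - ((proj B : Hardy) : L2) = w := by
      rw [hBdec]; exact sub_proj_add_left hgp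
    have habs3 : C - ((proj C : Hardy) : L2) =
        mulL h D - ((proj (mulL h D) : Hardy) : L2) := by
      rw [hCdec]; exact sub_proj_sub_right _ hsmem
    have habs4 : mulL h D - ((proj (mulL h D) : Hardy) : L2) =
        mulL h w - ((proj (mulL h w) : Hardy) : L2) := by
      rw [hDdec]; exact sub_proj_add_left hQDp
    -- main inequality between the antianalytic parts
    have hmain : ‖A - ((proj A : Hardy) : L2)‖ ≤ ‖B - ((proj B : Hardy) : L2)‖ := by
      rw [habs1, habs3, habs4, habs2]
      calc ‖mulL h w - ((proj (mulL h w) : Hardy) : L2)‖ ≤ ‖mulL h w‖ := norm_sub_proj_le _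
        _ ≤ ‖h‖ * ‖w‖ := norm_mulL_le h w
        _ ≤ 1 * ‖w‖ := mul_le_mul_of_nonneg_right hhnorm (norm_nonneg w)
        _ = ‖w‖ := one_mul _
    -- conclude via Pythagoras
    have h1 := norm_sq_proj A
    have h2 := norm_sq_proj B
    have hN : ‖B‖ = ‖A‖ := norm_mulL_conjLp φ (p : L2)
    have hfin : ‖((proj B : Hardy) : L2)‖ ≤ ‖((proj A : Hardy) : L2)‖ := by
      have hx2 : ‖A - ((proj A : Hardy) : L2)‖ ^ 2 ≤ ‖B - ((proj B : Hardy) : L2)‖ ^ 2 :=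
        pow_le_pow_left₀ (norm_nonneg _) hmain 2
      have hsq : ‖((proj B : Hardy) : L2)‖ ^ 2 ≤ ‖((proj A : Hardy) : L2)‖ ^ 2 := by
        rw [h1, h2, hN]; linarith
      exact (pow_le_pow_iff_left₀ (norm_nonneg _) (norm_nonneg _) (two_ne_zero)).mp hsq
    have hTp : T p = proj A := rfl
    have hTsp : (ContinuousLinearMap.adjoint T) p = proj B := by
      rw [hTdef, adjoint_toeplitz]; rfl
    calc ‖(ContinuousLinearMap.adjoint T) p‖ = ‖((proj B : Hardy) : L2)‖ := by rw [hTsp]; rfl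
      _ ≤ ‖((proj A : Hardy) : L2)‖ := hfin
      _ = ‖T p‖ := by rw [hTp]; rfl
  -- from the norm inequality to positivity of the self-commutator
  have e1 : ⟪selfCommutator T p, p⟫_ℂ =
      ((‖T p‖ ^ 2 - ‖(ContinuousLinearMap.adjoint T) p‖ ^ 2 : ℝ) : ℂ) := by
    have e0 : selfCommutator T p =
        ContinuousLinearMap.adjoint T (T p) - T (ContinuousLinearMap.adjoint T p) := rfl
    have c1 : ⟪ContinuousLinearMap.adjoint T (T p), p⟫_ℂ = ((‖T p‖ : ℂ)) ^ 2 := by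
      rw [ContinuousLinearMap.adjoint_inner_left, inner_self_eq_norm_sq_to_K]
      rfl
    have c2 : ⟪T (ContinuousLinearMap.adjoint T p), p⟫_ℂ =
        ((‖ContinuousLinearMap.adjoint T p‖ : ℂ)) ^ 2 := by
      rw [← ContinuousLinearMap.adjoint_inner_right, inner_self_eq_norm_sq_to_K]
      rfl
    rw [e0, inner_sub_left, c1, c2]
    push_cast
    ring
  rw [e1, Complex.zero_le_real, sub_nonneg]
  exact pow_le_pow_left₀ (norm_nonneg _) key 2
end SpectralArea
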